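/- Let κ₀ ∈ ℝ and κ₁ > 0 with (κ₀ + 1)/κ₁ < −1/4. Then the supremum of the set { τ(θ)^{θ−1} : θ ∈ (1/2, 1) } equals exp(−κ₀/2). -/
import Mathlib


/-- `r(θ) = 1 − κ₁(θ − 1/2)(θ − 1)`. -/
noncomputable def rfun (κ₁ θ : ℝ) : ℝ := 1 - κ₁ * (θ - 1/2) * (θ - 1)

/-- `τ(θ) = exp(1 + κ₀ − r(θ)/(2(1 − θ)))`. -/
noncomputable def tau (κ₀ κ₁ θ : ℝ) : ℝ :=
  Real.exp (1 + κ₀ - rfun κ₁ θ / (2 * (1 - θ)))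

/-- The constant `ϱ(κ₀,κ₁)` from formula (5.3) of the paper. -/
noncomputable def varrho (κ₀ κ₁ : ℝ) : ℝ :=
  if (κ₀ + 1) / κ₁ > 1/4 then Real.exp (1/2)
  else if (κ₀ + 1) / κ₁ < -(1/4) then Real.exp (-κ₀ / 2)
  else Real.exp ((16 * κ₀ ^ 2 - 8 * κ₀ * (κ₁ - 4) + (4 + κ₁) ^ 2) / (32 * κ₁))

lemma tau_rpow_eq (κ₀ κ₁ θ : ℝ) (hθ : θ ∈ Set.Ioo (1/2 : ℝ) 1) :
    tau κ₀ κ₁ θ ^ (θ - 1) =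
      Real.exp (-κ₀/2 + (θ - 1/2) * ((1 + κ₀ + κ₁/4) - κ₁ * (θ - 1/2) / 2)) := by
  have h1 : (1:ℝ) - θ ≠ 0 := by have := hθ.2; intro h; linarith
  rw [tau, Real.rpow_def_of_pos (Real.exp_pos _), Real.log_exp, rfun]
  congr 1
  field_simp
  ring

/-- Second case of formula (5.3): if `(κ₀+1)/κ₁ < −1/4` then
`sup { τ(θ)^{θ−1} : θ ∈ (1/2,1) } = exp(−κ₀/2)`. -/
theorem sup_tau_rpow_case_two (κ₀ κ₁ : ℝ) (hκ₁ : 0 < κ₁)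
    (hcase : (κ₀ + 1) / κ₁ < -(1/4)) :
    sSup ((fun θ : ℝ => tau κ₀ κ₁ θ ^ (θ - 1)) '' Set.Ioo (1/2 : ℝ) 1) =
      Real.exp (-κ₀ / 2) := by
  have hA0 : 1 + κ₀ + κ₁/4 < 0 := by
    have h := (div_lt_iff₀ hκ₁).mp hcase
    nlinarith
  set C : ℝ := κ₁/4 - (1 + κ₀ + κ₁/4) with hCdef
  have hCpos : 0 < C := by rw [hCdef]; nlinarith
  set E : ℝ := Real.exp (-κ₀ / 2) with hEdef
  have hEpos : 0 < E := Real.exp_pos _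
  have hCval : C = κ₁/4 - (1 + κ₀ + κ₁/4) := hCdef
  clear_value C E
  apply csSup_eq_of_forall_le_of_forall_lt_exists_gt
  · exact ⟨_, ⟨3/4, by norm_num, rfl⟩⟩
  · rintro a ⟨θ, hθ, rfl⟩
    show tau κ₀ κ₁ θ ^ (θ - 1) ≤ E
    rw [tau_rpow_eq κ₀ κ₁ θ hθ, hEdef]
    apply Real.exp_le_exp.mpr
    have h1 := hθ.1
    have h2 := hθ.2
    have hb : (0:ℝ) < -(1 + κ₀ + κ₁/4 - κ₁ * (θ - 1/2) / 2) := by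
      nlinarith [mul_pos hκ₁ (show (0:ℝ) < θ - 1/2 by linarith)]
    nlinarith [mul_pos (show (0:ℝ) < θ - 1/2 by linarith) hb]
  · intro w hw
    set s : ℝ := min (1/4) ((E - w) / (2 * E * C)) with hsdef
    have hspos : 0 < s := by
      apply lt_min (by norm_num)
      apply div_pos (by linarith) (by positivity)
    have hs4 : s ≤ 1/4 := min_le_left _ _
    have hs2 : s ≤ (E - w) / (2 * E * C) := min_le_right _ _
    clear_value s
    have hθmem : (1/2 + s : ℝ) ∈ Set.Ioo (1/2 : ℝ) 1 := by
      constructor <;> [linarith; linarith]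
    refine ⟨_, ⟨1/2 + s, hθmem, rfl⟩, ?_⟩
    show w < tau κ₀ κ₁ (1/2 + s) ^ (1/2 + s - 1)
    rw [tau_rpow_eq κ₀ κ₁ _ hθmem]
    have hstep1 : -κ₀/2 - s * C ≤
        -κ₀/2 + (1/2 + s - 1/2) * ((1 + κ₀ + κ₁/4) - κ₁ * (1/2 + s - 1/2) / 2) := by
      have : (1 + κ₀ + κ₁/4) - κ₁ * s / 2 ≥ -C := by
        rw [hCval]; nlinarith
      nlinarith
    have hstep2 : E * (1 - s * C) ≤ Real.exp (-κ₀/2 - s * C) := by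
      have h3 : Real.exp (-κ₀/2 - s*C) = E * Real.exp (-(s*C)) := by
        rw [hEdef, ← Real.exp_add]; ring_nf
      rw [h3]
      have := Real.add_one_le_exp (-(s*C))
      nlinarith
    have hstep3 : w < E * (1 - s * C) := by
      have hEsC : E * s * C ≤ (E - w) / 2 := by
        have := (le_div_iff₀ (by positivity : (0:ℝ) < 2 * E * C)).mp hs2
        nlinarith
      nlinarith
    calc w < E * (1 - s * C) := hstep3
      _ ≤ Real.exp (-κ₀/2 - s * C) := hstep2
      _ ≤ _ := Real.exp_le_exp.mpr hstep1
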